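/- For every complex number q with |q| < 1, ∑_{n≥1} q^n (−q^n; q)_∞ (−q^{n+1}; q)_∞^2 (−q^3; q^3)_{n−1} = (1/3)·( (−q; q)_∞^3 − (−q^3; q^3)_∞ ). -/

import Mathlib

/-!
The series telescopes. Put
`T n = (-q³; q³)_n ((-q^{n+1}; q)_∞³ - (-q^{3n+3}; q³)_∞) / 3`.
Peeling the first factor off each infinite product and using
`(1 + x)³ - (1 + x³) = 3x(1 + x)` with `x = q^{n+1}` shows that the `n`-th term is `T n - T (n+1)`.
Both tails tend to `1` and `(-q³; q³)_n` converges, so `T n → 0`, and the sum is `T 0`.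
-/

/-- Finite q-Pochhammer symbol `(a; q)_n = ∏_{j=0}^{n-1} (1 - a q^j)`. -/
noncomputable def qPoch (q a : ℂ) (n : ℕ) : ℂ := ∏ j ∈ Finset.range n, (1 - a * q ^ j)

/-- Infinite q-Pochhammer symbol `(a; q)_∞ = ∏_{j=0}^{∞} (1 - a q^j)`. -/
noncomputable def qPochInf (q a : ℂ) : ℂ := ∏' j : ℕ, (1 - a * q ^ j)

open Filter Topology

theorem hasSum_of_eq_sub_succ {G : Type*} [AddCommGroup G] [TopologicalSpace G]
    [IsTopologicalAddGroup G] [T2Space G] {f F : ℕ → G} {l : G} (hf : Summable f)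
    (hF : Tendsto F atTop (𝓝 l)) (h : ∀ n, f n = F n - F (n + 1)) : HasSum f (F 0 - l) := by
  rw [hf.hasSum_iff_tendsto_nat]
  simpa only [h, Finset.sum_range_sub'] using hF.const_sub (F 0)

theorem summable_pow_mul_of_tendsto {𝕜 : Type*} [NormedField 𝕜] [CompleteSpace 𝕜] {q : 𝕜}
    (hq : ‖q‖ < 1) {b : ℕ → 𝕜} {l : 𝕜}
    (hb : Tendsto b atTop (𝓝 l)) : Summable fun n => q ^ n * b n := by
  refine summable_of_isBigO_nat (summable_geometric_of_lt_one (norm_nonneg q) hq) ?_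
  simpa using (Asymptotics.isBigO_norm_right.2 (Asymptotics.isBigO_refl (q ^ ·) atTop)).mul
    (hb.isBigO_one ℝ)

theorem norm_pow_lt_one {𝕜 : Type*} [NormedDivisionRing 𝕜] {q : 𝕜} (hq : ‖q‖ < 1) {n : ℕ} (hn : n ≠ 0) : ‖q ^ n‖ < 1 := by
  rw [norm_pow]
  exact pow_lt_one₀ (norm_nonneg q) hq hn

theorem qPoch_succ (q a : ℂ) (n : ℕ) : qPoch q a (n + 1) = qPoch q a n * (1 - a * q ^ n) :=
  Finset.prod_range_succ _ n

section QPochhammer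

variable {q : ℂ}

theorem multipliable_one_sub_mul_pow (a : ℂ) (hq : ‖q‖ < 1) :
    Multipliable fun j : ℕ => 1 - a * q ^ j := by
  have hs : Summable fun j : ℕ => ‖-(a * q ^ j)‖ := by
    simpa only [norm_neg, norm_mul, norm_pow] using
      (summable_geometric_of_lt_one (norm_nonneg q) hq).mul_left ‖a‖
  simpa only [sub_eq_add_neg] using multipliable_one_add_of_summable hs

theorem qPochInf_eq_one_sub_mul (a : ℂ) (hq : ‖q‖ < 1) :
    qPochInf q a = (1 - a) * qPochInf q (a * q) := by
  have hshift : Multipliable fun j : ℕ => 1 - a * q ^ (j + 1) := by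
    simpa only [pow_succ', mul_assoc] using multipliable_one_sub_mul_pow (a * q) hq
  rw [qPochInf, tprod_eq_zero_mul' (f := fun j => 1 - a * q ^ j) hshift]
  simp only [pow_zero, mul_one, qPochInf, pow_succ', mul_assoc]

theorem qPochInf_neg_pow_succ (hq : ‖q‖ < 1) (n : ℕ) :
    qPochInf q (-q ^ (n + 1)) = (1 + q ^ (n + 1)) * qPochInf q (-q ^ (n + 2)) := by
  rw [qPochInf_eq_one_sub_mul _ hq, sub_neg_eq_add, neg_mul, ← pow_succ]

theorem tendsto_qPochInf_mul_pow (a : ℂ) (hq : ‖q‖ < 1) :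
    Tendsto (fun n => qPochInf q (a * q ^ n)) atTop (𝓝 1) := by
  have h := tendsto_tprod_one_add_of_dominated_convergence (𝓕 := atTop) (g := 0)
    (f := fun n k => -(a * q ^ n) * q ^ k) (bound := fun k => ‖a‖ * ‖q‖ ^ k)
    ((summable_geometric_of_lt_one (norm_nonneg q) hq).mul_left ‖a‖) ?_ ?_
  · simpa [qPochInf, sub_eq_add_neg] using h
  · intro k
    simpa using ((tendsto_pow_atTop_nhds_zero_of_norm_lt_one hq).const_mul a).neg.mul_const (q ^ k)
  · refine Eventually.of_forall fun n k => ?_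
    simp only [norm_mul, norm_neg, norm_pow]
    gcongr
    exact mul_le_of_le_one_right (norm_nonneg a) (pow_le_one₀ (norm_nonneg q) hq.le)

theorem tendsto_qPochInf_neg_pow_succ (hq : ‖q‖ < 1) :
    Tendsto (fun n => qPochInf q (-q ^ (n + 1))) atTop (𝓝 1) :=
  (tendsto_qPochInf_mul_pow (-q) hq).congr fun n => by rw [neg_mul, ← pow_succ']

theorem tendsto_qPoch (a : ℂ) (hq : ‖q‖ < 1) :
    Tendsto (qPoch q a) atTop (𝓝 (qPochInf q a)) :=
  (multipliable_one_sub_mul_pow a hq).hasProd.tendsto_prod_nat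

end QPochhammer

noncomputable def seriesTail (q : ℂ) (n : ℕ) : ℂ :=
  qPoch (q ^ 3) (-q ^ 3) n *
    (qPochInf q (-q ^ (n + 1)) ^ 3 - qPochInf (q ^ 3) (-(q ^ 3) ^ (n + 1))) / 3

theorem seriesTail_zero (q : ℂ) :
    seriesTail q 0 = 1 / 3 * (qPochInf q (-q) ^ 3 - qPochInf (q ^ 3) (-q ^ 3)) := by
  simp only [seriesTail, qPoch, Finset.prod_range_zero, zero_add, pow_one]
  ring

theorem seriesTail_sub_seriesTail_succ {q : ℂ} (hq : ‖q‖ < 1) (n : ℕ) :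
    seriesTail q n - seriesTail q (n + 1) = q ^ (n + 1) * qPochInf q (-q ^ (n + 1)) *
        qPochInf q (-q ^ (n + 2)) ^ 2 * qPoch (q ^ 3) (-q ^ 3) n := by
  have hq3 := norm_pow_lt_one hq three_ne_zero
  simp only [seriesTail, qPoch_succ, qPochInf_neg_pow_succ hq n, qPochInf_neg_pow_succ hq3 n]
  ring

theorem tendsto_seriesTail {q : ℂ} (hq : ‖q‖ < 1) : Tendsto (seriesTail q) atTop (𝓝 0) := by
  have hq3 := norm_pow_lt_one hq three_ne_zero
  rw [show (0 : ℂ) = qPochInf (q ^ 3) (-q ^ 3) * (1 ^ 3 - 1) / 3 by ring]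
  exact ((tendsto_qPoch _ hq3).mul
    (((tendsto_qPochInf_neg_pow_succ hq).pow 3).sub (tendsto_qPochInf_neg_pow_succ hq3))).div_const 3

theorem thmAp_c (q : ℂ) (hq : ‖q‖ < 1) :
    ∑' n : ℕ, q ^ (n + 1) * qPochInf q (-q ^ (n + 1)) *
        (qPochInf q (-q ^ (n + 2))) ^ 2 * qPoch (q ^ 3) (-q ^ 3) n
      = (1 / 3) * ((qPochInf q (-q)) ^ 3 - qPochInf (q ^ 3) (-q ^ 3)) := by
  have hq3 := norm_pow_lt_one hq three_ne_zero
  have hA := tendsto_qPochInf_neg_pow_succ hq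
  have hconv :=
    (hA.mul ((hA.comp (tendsto_add_atTop_nat 1)).pow 2)).mul (tendsto_qPoch (-q ^ 3) hq3)
  have hsum : Summable fun n : ℕ => q ^ (n + 1) * qPochInf q (-q ^ (n + 1)) *
      qPochInf q (-q ^ (n + 2)) ^ 2 * qPoch (q ^ 3) (-q ^ 3) n :=
    ((summable_pow_mul_of_tendsto hq hconv).mul_left q).congr fun n => by
      simp only [Function.comp_apply]; ring
  rw [← seriesTail_zero, ← sub_zero (seriesTail q 0)]
  exact (hasSum_of_eq_sub_succ hsum (tendsto_seriesTail hq)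
    fun n => (seriesTail_sub_seriesTail_succ hq n).symm).tsum_eq
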